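/- (No duality gap.) For every integer T ≥ 1, the optimal values of the primal and dual LPs coincide: p^T = d^T. In particular, there exists a minimizing sequence (u_k, v_k, w_k) of dual-feasible triples whose objective values ∫_X (w_k + T·u_k) dλ_X converge to p^T. -/

import Mathlib

open MeasureTheory Filter
open scoped ENNReal Topology

/-- Feasibility for the primal LP. -/
def PrimalFeasible (n : ℕ) (f : (Fin n → ℝ) → (Fin n → ℝ))
    (X0 X : Set (Fin n → ℝ)) (T : ℕ)
    (μ₀ μ μh ν : Measure (Fin n → ℝ)) (a : ℝ≥0∞) : Prop :=
  IsFiniteMeasure μ₀ ∧ IsFiniteMeasure μ ∧ IsFiniteMeasure μh ∧ IsFiniteMeasure ν ∧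
  μ₀ X0ᶜ = 0 ∧ μ Xᶜ = 0 ∧ μh Xᶜ = 0 ∧ ν Xᶜ = 0 ∧
  ν Set.univ + a = (T : ℝ≥0∞) * volume X ∧
  μ + ν = Measure.map f ν + μ₀ ∧
  μ + μh = volume.restrict X

/-- Optimal value of the primal LP (as a real number). -/
noncomputable def primalValue (n : ℕ) (f : (Fin n → ℝ) → (Fin n → ℝ))
    (X0 X : Set (Fin n → ℝ)) (T : ℕ) : ℝ :=
  sSup {r : ℝ | ∃ μ₀ μ μh ν a, PrimalFeasible n f X0 X T μ₀ μ μh ν a ∧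
    r = (μ Set.univ).toReal}

/-- Feasibility for the dual LP. -/
def DualFeasible (n : ℕ) (f : (Fin n → ℝ) → (Fin n → ℝ))
    (X0 X : Set (Fin n → ℝ)) (u : ℝ) (v w : (Fin n → ℝ) → ℝ) : Prop :=
  0 ≤ u ∧ Continuous v ∧ Continuous w ∧
  (∀ x ∈ X0, 0 ≤ v x) ∧
  (∀ x ∈ X, 1 + v x ≤ w x) ∧
  (∀ x ∈ X, 0 ≤ w x) ∧
  (∀ x ∈ X, v x ≤ u + v (f x))

/-- Optimal value of the dual LP. -/
noncomputable def dualValue (n : ℕ) (f : (Fin n → ℝ) → (Fin n → ℝ))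
    (X0 X : Set (Fin n → ℝ)) (T : ℕ) : ℝ :=
  sInf {r : ℝ | ∃ u v w, DualFeasible n f X0 X u v w ∧
    r = ∫ x in X, (w x + (T : ℝ) * u)}

open Finset Metric
open scoped NNReal

/-!
Weak duality `p ≤ d` comes from integrating the dual constraints against a primal feasible
point. For `d ≤ p` both programs are compared with a fractional knapsack whose item `t` is the
set `A t` of states reached for the first time at time `t`, with value `λ (A t)` and cost
`t * λ (A t)` against the budget `T * vol X`. A filling `g t ∈ [0, 1]` within the budget gives a
primal point: `g t • λ_{A t}` is pulled back to `X0` along `f^[t]` (a `C¹` map sends null sets to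
null sets) and the resulting trajectories are followed. A price `u ≥ 0` gives dual points
approximating `(1 - u t)⁺` on `A t`, whose objectives tend to
`∑ t, (1 - u t)⁺ λ (A t) + u T vol X`. The greedy filling and the price `1 / s` at its break
item `s` have the same value.
-/

lemma contDiff_of_forall_eq_eval_mvPolynomial {ι : Type*} [Fintype ι] {f : (ι → ℝ) → (ι → ℝ)}
    (hf : ∀ i, ∃ p : MvPolynomial ι ℝ, ∀ x, f x i = MvPolynomial.eval x p) {k : WithTop ℕ∞} :
    ContDiff ℝ k f :=
  contDiff_pi' fun i => by
    obtain ⟨p, hp⟩ := hf i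
    simpa only [hp] using (AnalyticOnNhd.eval_mvPolynomial p).contDiff

section Pushforward

variable {α β : Type*} [MeasurableSpace α] [MeasurableSpace β] {f : α → α}

noncomputable def occupationMeasure (f : α → α) (σ : Measure α) (t : ℕ) : Measure α :=
  ∑ s ∈ range t, σ.map f^[s]

lemma occupationMeasure_apply_univ (hf : Measurable f) (σ : Measure α) (t : ℕ) :
    occupationMeasure f σ t Set.univ = t * σ Set.univ := by
  simp [occupationMeasure, Measure.finsetSum_apply, Measure.map_apply (hf.iterate _)]

lemma map_iterate_add_occupationMeasure (hf : Measurable f) (σ : Measure α) (t : ℕ) :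
    σ.map f^[t] + occupationMeasure f σ t = (occupationMeasure f σ t).map f + σ := by
  have hshift : ∀ s, (σ.map f^[s]).map f = σ.map f^[s + 1] := fun s => by
    rw [Measure.map_map hf (hf.iterate s), ← Function.iterate_succ']
  rw [occupationMeasure, Measure.map_finset_sum hf.aemeasurable, add_comm, ← sum_range_succ,
    sum_range_succ']
  simp [hshift]

lemma map_apply_compl_eq_zero {g : α → β} (hg : Measurable g) {σ : Measure α} {A : Set α}
    {B : Set β} (hB : MeasurableSet B) (hAB : Set.MapsTo g A B) (hA : σ Aᶜ = 0) :
    σ.map g Bᶜ = 0 := by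
  rw [Measure.map_apply hg hB.compl]
  exact measure_mono_null (fun x hx hxA => hx (hAB hxA)) hA

lemma map_withDensity_comp {g : α → β} (hg : Measurable g) (μ : Measure α) {ρ : β → ℝ≥0∞}
    (hρ : Measurable ρ) : (μ.withDensity (ρ ∘ g)).map g = (μ.map g).withDensity ρ := by
  ext S hS
  rw [Measure.map_apply hg hS, withDensity_apply _ hS, withDensity_apply _ (hg hS),
    setLIntegral_map hS hρ hg, Function.comp_def]

lemma exists_absolutelyContinuous_map_eq {g : α → β} (hg : Measurable g) (μ : Measure α)
    [IsFiniteMeasure μ] {ν : Measure β} [SigmaFinite ν] (h : ν ≪ μ.map g) :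
    ∃ σ : Measure α, σ ≪ μ ∧ σ.map g = ν :=
  ⟨μ.withDensity (ν.rnDeriv (μ.map g) ∘ g), withDensity_absolutelyContinuous _ _, by
    rw [map_withDensity_comp hg μ (Measure.measurable_rnDeriv _ _),
      Measure.withDensity_rnDeriv_eq _ _ h]⟩

end Pushforward

section NullImage

variable {E : Type*} [NormedAddCommGroup E] [NormedSpace ℝ E] [FiniteDimensional ℝ E]
  [MeasurableSpace E] [BorelSpace E] (μ : Measure E) [μ.IsAddHaarMeasure]

lemma restrict_image_absolutelyContinuous_map {g : E → E} (hg : Differentiable ℝ g)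
    (S : Set E) : μ.restrict (g '' S) ≪ (μ.restrict S).map g := by
  refine Measure.AbsolutelyContinuous.mk fun B hB h0 => ?_
  rw [Measure.map_apply hg.continuous.measurable hB, Measure.restrict_apply
    (hg.continuous.measurable hB)] at h0
  rw [Measure.restrict_apply hB, ← Set.image_preimage_inter]
  exact addHaar_image_eq_zero_of_differentiableOn_of_addHaar_eq_zero μ hg.differentiableOn h0

lemma exists_map_eq_restrict_of_subset_image {g : E → E} (hg : Differentiable ℝ g) {S A : Set E}
    (hS : MeasurableSet S) (hSfin : μ S ≠ ∞) (hAfin : μ A ≠ ∞) (hAS : A ⊆ g '' S) :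
    ∃ σ : Measure E, IsFiniteMeasure σ ∧ σ Sᶜ = 0 ∧ σ.map g = μ.restrict A := by
  have : IsFiniteMeasure (μ.restrict S) := isFiniteMeasure_restrict.2 hSfin
  have : Fact (μ A < ∞) := ⟨hAfin.lt_top⟩
  obtain ⟨σ, hσS, hσmap⟩ := exists_absolutelyContinuous_map_eq hg.continuous.measurable
    (μ.restrict S) ((Measure.restrict_mono hAS le_rfl).absolutelyContinuous.trans
      (restrict_image_absolutelyContinuous_map μ hg S))
  refine ⟨σ, ⟨?_⟩, hσS (ae_restrict_mem hS), hσmap⟩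
  have := congrArg (· Set.univ) hσmap
  simp only [Measure.map_apply hg.continuous.measurable MeasurableSet.univ, Set.preimage_univ,
    Measure.restrict_apply_univ] at this
  exact this ▸ hAfin.lt_top

end NullImage

lemma sum_smul_restrict_disjointed_le {α : Type*} [MeasurableSpace α] (μ : Measure α)
    {F : ℕ → Set α} (hF : ∀ t, MeasurableSet (F t)) {X : Set α} (hFX : ∀ t, F t ⊆ X)
    {c : ℕ → ℝ≥0} (hc : ∀ t, c t ≤ 1) (N : ℕ) :
    ∑ t ∈ range N, c t • μ.restrict (disjointed F t) ≤ μ.restrict X := calc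
  ∑ t ∈ range N, c t • μ.restrict (disjointed F t)
      ≤ ∑ t ∈ range N, μ.restrict (disjointed F t) :=
    sum_le_sum fun t _ => Measure.le_iff'.2 fun s => by
      simpa using mul_le_of_le_one_left zero_le (ENNReal.coe_le_one_iff.2 (hc t))
  _ = μ.restrict (⋃ t ∈ range N, disjointed F t) := by
    rw [Measure.restrict_biUnion_finset ((disjoint_disjointed F).set_pairwise _)
      (MeasurableSet.disjointed hF), Measure.sum_fintype, univ_eq_attach]
    exact (sum_attach _ fun t => μ.restrict (disjointed F t)).symm
  _ ≤ μ.restrict X :=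
    Measure.restrict_mono (Set.iUnion₂_subset fun t _ => (disjointed_subset F t).trans (hFX t))
      le_rfl

section Primal

variable {n : ℕ} {f : (Fin n → ℝ) → (Fin n → ℝ)} {X0 X : Set (Fin n → ℝ)} {T : ℕ}

-- The mass `σ t` of initial states is followed for `t` steps: `μ` collects the final states and
-- `ν` the states visited before.
lemma primalFeasible_of_trajectories (hf : Measurable f) (hX : MeasurableSet X)
    (hXfin : volume X < ∞) (hreach : (⋃ t : ℕ, f^[t] '' X0) ⊆ X) (N : ℕ)
    (σ : ℕ → Measure (Fin n → ℝ)) [∀ t, IsFiniteMeasure (σ t)] (hσ : ∀ t, σ t X0ᶜ = 0)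
    (hle : ∑ t ∈ range N, (σ t).map f^[t] ≤ volume.restrict X)
    (hbudget : ∑ t ∈ range N, t * σ t Set.univ ≤ T * volume X) :
    PrimalFeasible n f X0 X T (∑ t ∈ range N, σ t) (∑ t ∈ range N, (σ t).map f^[t])
      (volume.restrict X - ∑ t ∈ range N, (σ t).map f^[t])
      (∑ t ∈ range N, occupationMeasure f (σ t) t)
      (T * volume X - ∑ t ∈ range N, t * σ t Set.univ) := by
  have : IsFiniteMeasure (volume.restrict X) := isFiniteMeasure_restrict.2 hXfin.ne
  have hνuniv : (∑ t ∈ range N, occupationMeasure f (σ t) t) Set.univ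
      = ∑ t ∈ range N, t * σ t Set.univ := by
    simp only [Measure.finsetSum_apply, occupationMeasure_apply_univ hf]
  refine ⟨inferInstance, inferInstance, inferInstance, ?_, ?_, ?_, ?_, ?_, ?_, ?_, ?_⟩
  · unfold occupationMeasure; infer_instance
  · simp [Measure.finsetSum_apply, hσ]
  · exact Measure.absolutelyContinuous_of_le hle (by simp [Measure.restrict_apply hX.compl])
  · exact Measure.absolutelyContinuous_of_le Measure.sub_le
      (by simp [Measure.restrict_apply hX.compl])
  · simp only [Measure.finsetSum_apply, occupationMeasure]
    exact sum_eq_zero fun t _ => sum_eq_zero fun s _ =>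
      map_apply_compl_eq_zero (hf.iterate s) hX
        (fun x hx => hreach (Set.mem_iUnion.2 ⟨s, x, hx, rfl⟩)) (hσ t)
  · rw [hνuniv, add_tsub_cancel_of_le hbudget]
  · rw [Measure.map_finset_sum hf.aemeasurable, ← sum_add_distrib, ← sum_add_distrib]
    exact sum_congr rfl fun t _ => map_iterate_add_occupationMeasure hf (σ t) t
  · rw [add_comm]; exact Measure.sub_add_cancel_of_le hle

lemma primal_objective_le (hX : IsCompact X) {μ₀ μ μh ν : Measure (Fin n → ℝ)} {a : ℝ≥0∞}
    (h : PrimalFeasible n f X0 X T μ₀ μ μh ν a) : (μ Set.univ).toReal ≤ volume.real X := by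
  have hsplit := congrArg (· Set.univ) h.2.2.2.2.2.2.2.2.2.2
  simp only [Measure.add_apply, Measure.restrict_apply_univ] at hsplit
  exact ENNReal.toReal_mono hX.measure_lt_top.ne (hsplit ▸ le_self_add)

lemma bddAbove_primal_objectives (hX : IsCompact X) :
    BddAbove {r : ℝ | ∃ μ₀ μ μh ν a, PrimalFeasible n f X0 X T μ₀ μ μh ν a ∧
      r = (μ Set.univ).toReal} := by
  refine ⟨volume.real X, ?_⟩
  rintro r ⟨μ₀, μ, μh, ν, a, h, rfl⟩
  exact primal_objective_le hX h

lemma le_primalValue_of_feasible (hX : IsCompact X) {μ₀ μ μh ν : Measure (Fin n → ℝ)}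
    {a : ℝ≥0∞} (h : PrimalFeasible n f X0 X T μ₀ μ μh ν a) :
    (μ Set.univ).toReal ≤ primalValue n f X0 X T :=
  le_csSup (bddAbove_primal_objectives hX) ⟨μ₀, μ, μh, ν, a, h, rfl⟩

lemma sum_mul_volume_disjointed_le_primalValue (hf : ContDiff ℝ 1 f) (hX0 : IsCompact X0)
    (hX : IsCompact X) (hreach : (⋃ t : ℕ, f^[t] '' X0) ⊆ X) (N : ℕ) (g : ℕ → ℝ)
    (hg : ∀ t, g t ∈ Set.Icc (0 : ℝ) 1)
    (hbudget : ∑ t ∈ range N, t * g t * volume.real (disjointed (fun t => f^[t] '' X0) t)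
      ≤ T * volume.real X) :
    ∑ t ∈ range N, g t * volume.real (disjointed (fun t => f^[t] '' X0) t)
      ≤ primalValue n f X0 X T := by
  set A := disjointed fun t => f^[t] '' X0
  have hmeas : ∀ t, MeasurableSet (f^[t] '' X0) := fun t =>
    (hX0.image (hf.continuous.iterate t)).measurableSet
  have hFX : ∀ t, f^[t] '' X0 ⊆ X := fun t =>
    (Set.subset_iUnion (fun t => f^[t] '' X0) t).trans hreach
  have hAfin : ∀ t, volume (A t) ≠ ∞ := fun t =>
    (measure_mono ((disjointed_subset _ t).trans (hFX t))).trans_lt hX.measure_lt_top |>.ne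
  have hlift : ∀ t, ∃ σ : Measure (Fin n → ℝ), IsFiniteMeasure σ ∧ σ X0ᶜ = 0 ∧
      σ.map f^[t] = volume.restrict (A t) := fun t =>
    exists_map_eq_restrict_of_subset_image volume ((hf.differentiable one_ne_zero).iterate t)
      hX0.measurableSet hX0.measure_lt_top.ne (hAfin t) (disjointed_subset _ t)
  choose σ hσfin hσX0 hσmap using hlift
  set τ := fun t => (g t).toNNReal • σ t
  have hτmap : ∀ t, (τ t).map f^[t] = (g t).toNNReal • volume.restrict (A t) := fun t => by
    rw [Measure.map_smul, hσmap]
  have hτuniv : ∀ t, (τ t Set.univ).toReal = g t * volume.real (A t) := fun t => by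
    have := congrArg (fun m => (m Set.univ).toReal) (hτmap t)
    simpa [Measure.map_apply (hf.continuous.iterate t).measurable, (hg t).1, measureReal_def]
      using this
  have hle : ∑ t ∈ range N, (τ t).map f^[t] ≤ volume.restrict X := by
    simpa only [hτmap] using sum_smul_restrict_disjointed_le volume hmeas hFX
      (fun t => Real.toNNReal_le_one.2 (hg t).2) N
  have hbudget' : ∑ t ∈ range N, t * τ t Set.univ ≤ T * volume X := by
    have hXfin : volume X ≠ ∞ := hX.measure_lt_top.ne
    have hterm : ∀ t : ℕ, (t : ℝ≥0∞) * τ t Set.univ ≠ ∞ := fun t =>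
      ENNReal.mul_ne_top (ENNReal.natCast_ne_top t) (measure_ne_top _ _)
    rw [← ENNReal.toReal_le_toReal (ENNReal.sum_ne_top.2 fun t _ => hterm t)
      (ENNReal.mul_ne_top (ENNReal.natCast_ne_top T) hXfin), ENNReal.toReal_sum fun t _ => hterm t]
    simpa [hτuniv, mul_assoc, measureReal_def] using hbudget
  have hfeas := primalFeasible_of_trajectories (T := T) hf.continuous.measurable
    hX.measurableSet hX.measure_lt_top hreach N τ (fun t => by simp [τ, hσX0 t]) hle hbudget'
  refine le_trans (le_of_eq ?_) (le_primalValue_of_feasible hX hfeas)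
  rw [Measure.finsetSum_apply, ENNReal.toReal_sum fun t _ => measure_ne_top _ _]
  simp only [Measure.map_apply (hf.continuous.iterate _).measurable MeasurableSet.univ,
    Set.preimage_univ, hτuniv]

end Primal

section DualCandidate

variable {E : Type*} [PseudoMetricSpace E]

lemma LipschitzOnWith.infDist_image_le {f : E → E} {K : ℝ≥0} {s S : Set E}
    (hf : LipschitzOnWith K f s) (hS : S ⊆ s) {x : E} (hx : x ∈ s) :
    infDist (f x) (f '' S) ≤ K * infDist x S := by
  rcases S.eq_empty_or_nonempty with rfl | hne
  · simp
  have : Nonempty S := hne.to_subtype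
  rw [infDist_eq_iInf (x := x), Real.mul_iInf_of_nonneg K.coe_nonneg]
  exact le_ciInf fun a => (infDist_le_dist_of_mem (Set.mem_image_of_mem f a.2)).trans
    (hf.dist_le_mul x hx a (hS a.2))

-- As `k → ∞` this tends to `max {(1 - u t)⁺ | t < N, x ∈ F t}`; the weights `L ^ (-t)` make it
-- satisfy the dual constraint `w x ≤ u + w (f x)` for an `L`-Lipschitz `f`.
noncomputable def dualCandidate (F : ℕ → Set E) (L : ℝ≥0) (u : ℝ) (N k : ℕ) (x : E) : ℝ≥0 :=
  (range N).sup fun t => Real.toNNReal (1 - u * t - (k + 1) / L ^ t * infDist x (F t))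

variable (F : ℕ → Set E) (L : ℝ≥0) (u : ℝ) (N k : ℕ)

lemma continuous_dualCandidate : Continuous (dualCandidate F L u N k) :=
  Continuous.finset_sup_apply fun _ _ => continuous_real_toNNReal.comp <|
    continuous_const.sub (continuous_const.mul (continuous_infDist_pt _))

lemma one_le_dualCandidate (hN : 0 < N) {x : E} (hx : x ∈ F 0) :
    1 ≤ dualCandidate F L u N k x := by
  refine le_trans (le_of_eq ?_) (le_sup (f := fun t => Real.toNNReal
    (1 - u * t - (k + 1) / L ^ t * infDist x (F t))) (mem_range.2 hN))
  simp [infDist_zero_of_mem hx]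

lemma dualCandidate_le_one (hu : 0 ≤ u) {x : E} : dualCandidate F L u N k x ≤ 1 :=
  Finset.sup_le fun t _ => Real.toNNReal_le_one.2 <| by
    nlinarith [mul_nonneg hu t.cast_nonneg,
      mul_nonneg (by positivity : (0 : ℝ) ≤ (k + 1) / L ^ t) (infDist_nonneg (x := x) (s := F t))]

lemma dualCandidate_le_add {f : E → E} {s : Set E} (hL : 0 < L) (hf : LipschitzOnWith L f s)
    (hFs : ∀ t, F t ⊆ s) (hF : ∀ t, F (t + 1) = f '' F t) (hu : 0 ≤ u)
    (huN : 1 ≤ u * N) {x : E} (hx : x ∈ s) :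
    (dualCandidate F L u N k x : ℝ) ≤ u + dualCandidate F L u N k (f x) := by
  set c : ℕ → ℝ := fun t => (k + 1) / L ^ t
  have hterm : ∀ t ∈ range N, Real.toNNReal (1 - u * t - c t * infDist x (F t))
      ≤ u.toNNReal + dualCandidate F L u N k (f x) := by
    intro t ht
    by_cases hlast : N ≤ t + 1
    · have : (1 : ℝ) ≤ u * (t + 1) :=
        huN.trans (mul_le_mul_of_nonneg_left (by exact_mod_cast hlast) hu)
      refine le_add_right (Real.toNNReal_le_toNNReal ?_)
      nlinarith [mul_nonneg (by positivity : 0 ≤ c t) (infDist_nonneg (x := x) (s := F t))]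
    have hshift : c (t + 1) * infDist (f x) (F (t + 1)) ≤ c t * infDist x (F t) := calc
      c (t + 1) * infDist (f x) (F (t + 1)) ≤ c (t + 1) * (L * infDist x (F t)) := by
        rw [hF]
        exact mul_le_mul_of_nonneg_left (hf.infDist_image_le (hFs t) hx) (by positivity)
      _ = c t * infDist x (F t) := by
        simp only [c, pow_succ]
        field_simp
    calc Real.toNNReal (1 - u * t - c t * infDist x (F t))
        ≤ Real.toNNReal (u + (1 - u * (t + 1 : ℕ) - c (t + 1) * infDist (f x) (F (t + 1)))) :=
          Real.toNNReal_le_toNNReal (by push_cast; linarith)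
      _ ≤ u.toNNReal + dualCandidate F L u N k (f x) :=
          Real.toNNReal_add_le.trans (add_le_add le_rfl (le_sup (f := fun t =>
            Real.toNNReal (1 - u * t - c t * infDist (f x) (F t)))
            (mem_range.2 (by omega : t + 1 < N))))
  have := Finset.sup_le hterm
  calc (dualCandidate F L u N k x : ℝ) ≤ ((u.toNNReal + dualCandidate F L u N k (f x) : ℝ≥0) : ℝ) :=
        NNReal.coe_le_coe.2 this
    _ = u + dualCandidate F L u N k (f x) := by push_cast [Real.coe_toNNReal _ hu]; rfl

lemma tendsto_dualCandidate (hL : 0 < L) (hF : ∀ t, IsClosed (F t)) (hne : ∀ t, (F t).Nonempty)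
    (x : E) : Tendsto (fun k => dualCandidate F L u N k x) atTop
      (𝓝 ((range N).sup fun t => (F t).indicator (fun _ => (1 - u * t).toNNReal) x)) := by
  have hterm : ∀ t ∈ range N, ∀ᶠ k : ℕ in atTop,
      Real.toNNReal (1 - u * t - (k + 1) / L ^ t * infDist x (F t))
        = (F t).indicator (fun _ => (1 - u * t).toNNReal) x := by
    intro t _
    by_cases hx : x ∈ F t
    · exact Eventually.of_forall fun k => by simp [infDist_zero_of_mem hx, hx]
    have hd : 0 < infDist x (F t) := ((hF t).notMem_iff_infDist_pos (hne t)).1 hx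
    have hgrow : Tendsto (fun k : ℕ => ((k : ℝ) + 1) / L ^ t * infDist x (F t)) atTop atTop :=
      ((tendsto_natCast_atTop_atTop.atTop_add tendsto_const_nhds).atTop_div_const
        (by positivity)).atTop_mul_const hd
    filter_upwards [hgrow.eventually_ge_atTop (1 - u * t)] with k hk
    simp [hx, hk]
  refine tendsto_const_nhds.congr' ?_
  filter_upwards [(eventually_all_finset _).2 hterm] with k hk
  exact (sup_congr rfl hk).symm

end DualCandidate

lemma sup_indicator_eq_sum_indicator_disjointed {α : Type*} (F : ℕ → Set α) {c : ℕ → ℝ≥0}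
    (hc : Antitone c) (N : ℕ) (x : α) :
    (range N).sup (fun t => (F t).indicator (fun _ => c t) x)
      = ∑ t ∈ range N, (disjointed F t).indicator (fun _ => c t) x := by
  induction N with
  | zero => simp
  | succ N ih =>
    rw [sum_range_succ, ← ih, range_add_one, sup_insert, sup_comm]
    by_cases hfirst : x ∈ disjointed F N
    · have hbefore : ∀ t < N, x ∉ F t := by
        simpa [disjointed_eq_inter_compl] using hfirst.2
      have : (range N).sup (fun t => (F t).indicator (fun _ => c t) x) = 0 :=
        le_bot_iff.1 <| Finset.sup_le fun t ht => by
          simp [hbefore t (mem_range.1 ht)]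
      simp [this, hfirst, disjointed_subset F N hfirst]
    rw [Set.indicator_of_notMem hfirst, add_zero, sup_eq_left]
    by_cases hN : x ∈ F N
    · obtain ⟨t, ht, hxt⟩ : ∃ t < N, x ∈ F t := by
        simpa [disjointed_eq_inter_compl, hN] using hfirst
      rw [Set.indicator_of_mem hN]
      exact (hc ht.le).trans (le_sup_of_le (mem_range.2 ht) (by simp [hxt]))
    · simp [hN]

section DualCandidateIntegral

variable {E : Type*} [PseudoMetricSpace E] [MeasurableSpace E] [OpensMeasurableSpace E]
  (F : ℕ → Set E) (L : ℝ≥0) {u : ℝ} (N : ℕ)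

lemma tendsto_integral_dualCandidate (μ : Measure E) {X : Set E}
    (hXfin : μ X ≠ ∞) (hL : 0 < L) (hu : 0 ≤ u) (hF : ∀ t, IsClosed (F t))
    (hne : ∀ t, (F t).Nonempty) (hFX : ∀ t, F t ⊆ X) :
    Tendsto (fun k => ∫ x in X, (dualCandidate F L u N k x : ℝ) ∂μ) atTop
      (𝓝 (∑ t ∈ range N, (1 - u * t).toNNReal * μ.real (disjointed F t))) := by
  have : IsFiniteMeasure (μ.restrict X) := isFiniteMeasure_restrict.2 hXfin
  have hA : ∀ t, MeasurableSet (disjointed F t) :=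
    MeasurableSet.disjointed fun t => (hF t).measurableSet
  have hlimit := tendsto_integral_of_dominated_convergence (μ := μ.restrict X) (fun _ => 1)
    (fun k => (NNReal.continuous_coe.comp
      (continuous_dualCandidate F L u N k)).aestronglyMeasurable)
    (integrable_const 1)
    (fun k => Eventually.of_forall fun x => by
      simpa using dualCandidate_le_one F L u N k hu)
    (Eventually.of_forall fun x =>
      NNReal.tendsto_coe.2 (tendsto_dualCandidate F L u N hL hF hne x))
  convert hlimit using 2
  · rfl
  have hanti : Antitone fun t : ℕ => (1 - u * t).toNNReal := fun s t hst =>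
    Real.toNNReal_le_toNNReal (by nlinarith [(Nat.cast_le (α := ℝ)).2 hst])
  simp_rw [sup_indicator_eq_sum_indicator_disjointed F hanti, NNReal.coe_sum, NNReal.coe_indicator]
  rw [integral_finsetSum _ fun t _ => (integrable_const _).indicator (hA t)]
  refine sum_congr rfl fun t _ => ?_
  rw [integral_indicator_const _ (hA t), measureReal_restrict_apply (hA t),
    Set.inter_eq_left.2 ((disjointed_subset F t).trans (hFX t)), smul_eq_mul, mul_comm]

end DualCandidateIntegral

section DualValue

variable {n : ℕ} {f : (Fin n → ℝ) → (Fin n → ℝ)} {X0 X : Set (Fin n → ℝ)} {T : ℕ}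

lemma dualFeasible_const : DualFeasible n f X0 X 0 (fun _ => 0) (fun _ => 1) :=
  ⟨le_rfl, continuous_const, continuous_const, fun _ _ => le_rfl, fun _ _ => by norm_num,
    fun _ _ => zero_le_one, fun _ _ => by norm_num⟩

lemma bddBelow_dual_objectives (hX : IsCompact X) :
    BddBelow {r : ℝ | ∃ u v w, DualFeasible n f X0 X u v w ∧
      r = ∫ x in X, (w x + (T : ℝ) * u)} := by
  refine ⟨0, ?_⟩
  rintro r ⟨u, v, w, h, rfl⟩
  exact setIntegral_nonneg hX.measurableSet fun x hx =>
    add_nonneg (h.2.2.2.2.2.1 x hx) (mul_nonneg T.cast_nonneg h.1)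

lemma dualValue_le_of_feasible (hX : IsCompact X) {u : ℝ} {v w : (Fin n → ℝ) → ℝ}
    (h : DualFeasible n f X0 X u v w) :
    dualValue n f X0 X T ≤ ∫ x in X, (w x + (T : ℝ) * u) :=
  csInf_le (bddBelow_dual_objectives hX) ⟨u, v, w, h, rfl⟩

lemma dualFeasible_dualCandidate {L : ℝ≥0} (hL : 0 < L) (hfL : LipschitzOnWith L f X)
    (hreach : (⋃ t : ℕ, f^[t] '' X0) ⊆ X) {u : ℝ} (hu : 0 ≤ u) {N : ℕ} (huN : 1 ≤ u * N)
    (k : ℕ) :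
    DualFeasible n f X0 X u (fun x => dualCandidate (fun t => f^[t] '' X0) L u N k x - 1)
      (fun x => dualCandidate (fun t => f^[t] '' X0) L u N k x) := by
  have hcont := NNReal.continuous_coe.comp (continuous_dualCandidate (fun t => f^[t] '' X0) L u N k)
  refine ⟨hu, hcont.sub continuous_const, hcont, fun x hx => ?_, fun x _ => by linarith,
    fun x _ => NNReal.coe_nonneg _, fun x hx => ?_⟩
  · have hN : 0 < N := Nat.pos_of_ne_zero fun h => by simp [h] at huN; linarith
    exact sub_nonneg.2 (NNReal.coe_le_coe.2 (one_le_dualCandidate _ L u N k hN (by simpa using hx)))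
  · have := dualCandidate_le_add (fun t => f^[t] '' X0) L u N k hL hfL
      (fun t => (Set.subset_iUnion (fun t => f^[t] '' X0) t).trans hreach)
      (fun t => by simp only [Function.iterate_succ', Set.image_comp]) hu huN hx
    linarith

lemma dualValue_le (hf : ContDiff ℝ 1 f) (hX0 : IsCompact X0) (hX : IsCompact X)
    (hreach : (⋃ t : ℕ, f^[t] '' X0) ⊆ X) {u : ℝ} (hu : 0 ≤ u) {N : ℕ} (huN : 1 ≤ u * N) :
    dualValue n f X0 X T ≤ ∑ t ∈ range N,
      (1 - u * t).toNNReal * volume.real (disjointed (fun t => f^[t] '' X0) t)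
        + u * (T * volume.real X) := by
  have hXfin : volume X ≠ ∞ := hX.measure_lt_top.ne
  have hobjective : ∀ w : (Fin n → ℝ) → ℝ, Continuous w →
      ∫ x in X, (w x + (T : ℝ) * u) = (∫ x in X, w x) + u * (T * volume.real X) := fun w hw => by
    have : IsFiniteMeasure (volume.restrict X) := isFiniteMeasure_restrict.2 hXfin
    rw [integral_add (hw.continuousOn.integrableOn_compact hX) (integrable_const _), integral_const,
      measureReal_restrict_apply_univ, smul_eq_mul]
    ring
  -- `dualCandidate` is useless for `X0 = ∅`, where `infDist x ∅ = 0`.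
  rcases X0.eq_empty_or_nonempty with rfl | hX0ne
  · have hfeas : DualFeasible n f ∅ X u (fun _ => -1) (fun _ => 0) :=
      ⟨hu, continuous_const, continuous_const, by simp, fun _ _ => by norm_num, fun _ _ => le_rfl,
        fun _ _ => by linarith⟩
    have hnone : ∀ t, disjointed (fun _ : ℕ => (∅ : Set (Fin n → ℝ))) t = ∅ := fun t =>
      Set.subset_empty_iff.1 (disjointed_subset _ t)
    simpa [hobjective _ continuous_const, hnone, mul_comm, mul_assoc] using
      dualValue_le_of_feasible (T := T) hX hfeas
  obtain ⟨K, hK⟩ :=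
    (hf.locallyLipschitz.locallyLipschitzOn (s := X)).exists_lipschitzOnWith_of_compact hX
  have hfeas := dualFeasible_dualCandidate (L := K + 1) (by positivity)
    (hK.weaken (le_add_of_nonneg_right zero_le_one)) hreach hu huN
  refine ge_of_tendsto' (x := atTop) ?_ fun k => dualValue_le_of_feasible hX (hfeas k)
  simp only [hobjective _ (hfeas _).2.2.1]
  exact (tendsto_integral_dualCandidate _ (K + 1) N volume hXfin (by positivity) hu
    (fun t => (hX0.image (hf.continuous.iterate t)).isClosed) (fun t => hX0ne.image _)
    (fun t => (Set.subset_iUnion (fun t => f^[t] '' X0) t).trans hreach)).add_const _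

lemma exists_tendsto_dualValue (hX : IsCompact X) :
    ∃ (u : ℕ → ℝ) (v w : ℕ → (Fin n → ℝ) → ℝ),
      (∀ k, DualFeasible n f X0 X (u k) (v k) (w k)) ∧
      Tendsto (fun k => ∫ x in X, (w k x + (T : ℝ) * u k)) atTop (𝓝 (dualValue n f X0 X T)) := by
  obtain ⟨r, -, hr, hrmem⟩ := exists_seq_tendsto_sInf
    (⟨_, 0, _, _, dualFeasible_const, rfl⟩ : Set.Nonempty {r : ℝ | ∃ u v w,
      DualFeasible n f X0 X u v w ∧ r = ∫ x in X, (w x + (T : ℝ) * u)})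
    (bddBelow_dual_objectives hX)
  choose u v w hfeas hobj using hrmem
  refine ⟨u, v, w, hfeas, ?_⟩
  simp only [← hobj]
  exact hr

end DualValue

lemma Continuous.integrable_of_measure_compl_eq_zero {E : Type*} [TopologicalSpace E]
    [T2Space E] [MeasurableSpace E] [OpensMeasurableSpace E] {m : Measure E} [IsFiniteMeasure m]
    {K : Set E}
    (hK : IsCompact K) (hm : m Kᶜ = 0) {φ : E → ℝ} (hφ : Continuous φ) : Integrable φ m := by
  rw [← Measure.restrict_eq_self_of_ae_mem (s := K) hm]
  exact hφ.continuousOn.integrableOn_compact hK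

section WeakDuality

variable {n : ℕ} {f : (Fin n → ℝ) → (Fin n → ℝ)} {X0 X : Set (Fin n → ℝ)} {T : ℕ}

lemma primal_objective_le_dual_objective (hf : Continuous f) (hX0 : IsCompact X0)
    (hX : IsCompact X) {μ₀ μ μh ν : Measure (Fin n → ℝ)} {a : ℝ≥0∞} {u : ℝ}
    {v w : (Fin n → ℝ) → ℝ} (hP : PrimalFeasible n f X0 X T μ₀ μ μh ν a)
    (hD : DualFeasible n f X0 X u v w) :
    (μ Set.univ).toReal ≤ ∫ x in X, (w x + (T : ℝ) * u) := by
  obtain ⟨_, _, _, _, hμ₀, hμ, hμh, hν, hmass, hbalance, hsplit⟩ := hP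
  obtain ⟨hu, hv, hw, hv0, hwv, hw0, hvu⟩ := hD
  have : IsFiniteMeasure (volume.restrict X) := isFiniteMeasure_restrict.2 hX.measure_lt_top.ne
  have hvfν : Integrable v (ν.map f) := hv.integrable_of_measure_compl_eq_zero (hX.image hf)
    (map_apply_compl_eq_zero hf.measurable (hX.image hf).measurableSet (Set.mapsTo_image f X) hν)
  have hwX : ∫ x in X, w x = ∫ x, w x ∂μ + ∫ x, w x ∂μh := by
    rw [← integral_add_measure (hw.integrable_of_measure_compl_eq_zero hX hμ)
      (hw.integrable_of_measure_compl_eq_zero hX hμh), hsplit]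
  have hμh_nonneg : 0 ≤ ∫ x, w x ∂μh := integral_nonneg_of_ae (Eventually.mono hμh hw0)
  have hμ_le : μ.real Set.univ + ∫ x, v x ∂μ ≤ ∫ x, w x ∂μ := by
    have hvμ := hv.integrable_of_measure_compl_eq_zero hX hμ
    have := integral_mono_ae (f := fun x => 1 + v x) ((integrable_const 1).add hvμ)
      (hw.integrable_of_measure_compl_eq_zero hX hμ) (Eventually.mono hμ hwv)
    rwa [integral_add (integrable_const 1) hvμ, integral_const, smul_eq_mul, mul_one] at this
  have hbal : ∫ x, v x ∂μ + ∫ x, v x ∂ν = ∫ x, v (f x) ∂ν + ∫ x, v x ∂μ₀ := by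
    rw [← integral_add_measure (hv.integrable_of_measure_compl_eq_zero hX hμ)
      (hv.integrable_of_measure_compl_eq_zero hX hν), hbalance,
      integral_add_measure hvfν (hv.integrable_of_measure_compl_eq_zero hX0 hμ₀),
      integral_map hf.aemeasurable hv.aestronglyMeasurable]
  have hμ₀_nonneg : 0 ≤ ∫ x, v x ∂μ₀ := integral_nonneg_of_ae (Eventually.mono hμ₀ hv0)
  have hν_le : ∫ x, v x ∂ν - u * ν.real Set.univ ≤ ∫ x, v (f x) ∂ν := by
    have hvν := hv.integrable_of_measure_compl_eq_zero hX hν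
    have := integral_mono_ae (f := fun x => v x - u) (g := fun x => v (f x))
      (hvν.sub (integrable_const u))
      ((hv.comp hf).integrable_of_measure_compl_eq_zero hX hν)
      (Eventually.mono hν fun x hx => by linarith [hvu x hx])
    rwa [integral_sub hvν (integrable_const u), integral_const, smul_eq_mul, mul_comm] at this
  have hν_mass : ν.real Set.univ ≤ T * volume.real X := by
    have := ENNReal.toReal_mono (ENNReal.mul_ne_top (ENNReal.natCast_ne_top T)
      hX.measure_lt_top.ne) (hmass ▸ le_self_add : ν Set.univ ≤ T * volume X)
    simpa [measureReal_def] using this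
  rw [← measureReal_def, integral_add (hw.continuousOn.integrableOn_compact hX)
    (integrable_const _), integral_const, measureReal_restrict_apply_univ, smul_eq_mul]
  linarith [mul_le_mul_of_nonneg_left hν_mass hu]

lemma primalValue_le_dualValue (hf : Continuous f) (hX0 : IsCompact X0) (hX : IsCompact X)
    (hreach : (⋃ t : ℕ, f^[t] '' X0) ⊆ X) :
    primalValue n f X0 X T ≤ dualValue n f X0 X T := by
  have hzero := primalFeasible_of_trajectories (T := T) hf.measurable hX.measurableSet
    hX.measure_lt_top hreach 0 (fun _ => 0) (fun _ => rfl) (by simpa using Measure.zero_le _)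
    (by simp)
  refine le_csInf ⟨_, 0, _, _, dualFeasible_const, rfl⟩ ?_
  rintro r ⟨u, v, w, hD, rfl⟩
  refine csSup_le ⟨_, _, _, _, _, _, hzero, rfl⟩ ?_
  rintro s ⟨μ₀, μ, μh, ν, a, hP, rfl⟩
  exact primal_objective_le_dual_objective hf hX0 hX hP hD

end WeakDuality

section FractionalKnapsack

variable {c : ℕ → ℝ} {B p d : ℝ}

lemma knapsack_dual_le_greedy
    (hd : ∀ u : ℝ, 0 ≤ u → ∀ N : ℕ, 1 ≤ u * N →
      d ≤ ∑ t ∈ range N, (1 - u * t).toNNReal * c t + u * B)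
    {s : ℕ} (hs : 0 < s) :
    d ≤ ∑ t ∈ range s, c t + (B - ∑ t ∈ range s, t * c t) / s := by
  have hs' : (0 : ℝ) < s := Nat.cast_pos.2 hs
  have hterm : ∀ t ∈ range s, ((1 - 1 / (s : ℝ) * t).toNNReal : ℝ) * c t = c t - t * c t / s :=
    fun t ht => by
      rw [Real.coe_toNNReal _ (by
        rw [sub_nonneg, one_div_mul_eq_div, div_le_one hs']
        exact_mod_cast (mem_range.1 ht).le)]
      ring
  have := hd (1 / s) (by positivity) s (by field_simp; rfl)
  rw [sum_congr rfl hterm, sum_sub_distrib, ← sum_div] at this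
  linarith [show (B - ∑ t ∈ range s, t * c t) / s = B / s - (∑ t ∈ range s, t * c t) / s by ring,
    show 1 / (s : ℝ) * B = B / s by ring]

lemma knapsack_greedy_le_primal (hc : ∀ t, 0 ≤ c t)
    (hp : ∀ (N : ℕ) (g : ℕ → ℝ), (∀ t, g t ∈ Set.Icc (0 : ℝ) 1) →
      ∑ t ∈ range N, t * g t * c t ≤ B → ∑ t ∈ range N, g t * c t ≤ p)
    {s : ℕ} (hfits : ∑ t ∈ range s, t * c t ≤ B) (hgap : B - ∑ t ∈ range s, t * c t < s * c s) :
    ∑ t ∈ range s, c t + (B - ∑ t ∈ range s, t * c t) / s ≤ p := by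
  set δ := B - ∑ t ∈ range s, t * c t
  have hsc : 0 < (s : ℝ) * c s := by linarith
  have hs0 : (0 : ℝ) < s := pos_of_mul_pos_left hsc (hc s)
  have hcs : c s ≠ 0 := (pos_of_mul_pos_right hsc hs0.le).ne'
  set g : ℕ → ℝ := fun t => if t < s then 1 else δ / (s * c s)
  have hg : ∀ t, g t ∈ Set.Icc (0 : ℝ) 1 := fun t => by
    by_cases ht : t < s
    · simp [g, ht]
    · simp only [g, if_neg ht]
      exact ⟨div_nonneg (by linarith) hsc.le, (div_le_one hsc).2 hgap.le⟩
  have hg_lt : ∀ t ∈ range s, g t = 1 := fun t ht => if_pos (mem_range.1 ht)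
  have hg_s : g s * c s = δ / s := by
    simp only [g, lt_irrefl, if_false]
    field_simp
  have hvalue := hp (s + 1) g hg (by
    rw [sum_range_succ, mul_assoc, hg_s, sum_congr rfl fun t ht => by rw [hg_lt t ht, mul_one]]
    field_simp
    linarith)
  rwa [sum_range_succ, hg_s, sum_congr rfl fun t ht => by rw [hg_lt t ht, one_mul]] at hvalue

lemma le_of_fractional_knapsack (hc : ∀ t, 0 ≤ c t) (hB : 0 ≤ B)
    (hp : ∀ (N : ℕ) (g : ℕ → ℝ), (∀ t, g t ∈ Set.Icc (0 : ℝ) 1) →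
      ∑ t ∈ range N, t * g t * c t ≤ B → ∑ t ∈ range N, g t * c t ≤ p)
    (hd : ∀ u : ℝ, 0 ≤ u → ∀ N : ℕ, 1 ≤ u * N →
      d ≤ ∑ t ∈ range N, (1 - u * t).toNNReal * c t + u * B) :
    d ≤ p := by
  set W : ℕ → ℝ := fun s => ∑ t ∈ range s, t * c t
  by_cases hfits : ∀ s, W s ≤ B
  · refine le_of_forall_pos_lt_add fun ε hε => ?_
    obtain ⟨s, hs⟩ := exists_nat_gt (B / ε)
    have hs0 : (0 : ℝ) < s := (div_nonneg hB hε.le).trans_lt hs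
    have hW : 0 ≤ W s := sum_nonneg fun t _ => mul_nonneg t.cast_nonneg (hc t)
    have hslack : (B - W s) / s < ε := by
      rw [div_lt_iff₀ hs0]
      rw [div_lt_iff₀ hε] at hs
      linarith
    have hall := hp s (fun _ => 1) (fun _ => ⟨zero_le_one, le_rfl⟩) (by simpa using hfits s)
    simp only [one_mul] at hall
    linarith [knapsack_dual_le_greedy hd (Nat.cast_pos.1 hs0)]
  have hexceed : ∃ m, B < W m := by simpa using hfits
  obtain ⟨s, hs⟩ : ∃ s, Nat.find hexceed = s + 1 :=
    Nat.exists_eq_succ_of_ne_zero fun h => by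
      have := Nat.find_spec hexceed
      simp only [h, W, range_zero, sum_empty] at this
      linarith
  have hWs : W s ≤ B := not_lt.1 (Nat.find_min hexceed (by omega))
  have hgap : B - W s < s * c s := by
    have := hs ▸ Nat.find_spec hexceed
    simp only [W, sum_range_succ] at this
    linarith
  have hs0 : 0 < s := Nat.pos_of_ne_zero fun h => by simp [h, W] at hgap; linarith
  exact (knapsack_dual_le_greedy hd hs0).trans (knapsack_greedy_le_primal hc hp hWs hgap)

end FractionalKnapsack

theorem no_duality_gap_general (n : ℕ)
    (f : (Fin n → ℝ) → (Fin n → ℝ))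
    (hfpoly : ∀ i, ∃ p : MvPolynomial (Fin n) ℝ, ∀ x, f x i = MvPolynomial.eval x p)
    (X0 X : Set (Fin n → ℝ)) (hX0 : IsCompact X0) (hX : IsCompact X)
    (hreach : (⋃ t : ℕ, f^[t] '' X0) ⊆ X)
    (T : ℕ) :
    primalValue n f X0 X T = dualValue n f X0 X T ∧
      ∃ (u : ℕ → ℝ) (v w : ℕ → (Fin n → ℝ) → ℝ),
        (∀ k, DualFeasible n f X0 X (u k) (v k) (w k)) ∧
        Tendsto (fun k => ∫ x in X, (w k x + (T : ℝ) * u k)) atTop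
          (𝓝 (primalValue n f X0 X T)) := by
  have hf : ContDiff ℝ 1 f := contDiff_of_forall_eq_eval_mvPolynomial hfpoly
  have hgap : primalValue n f X0 X T = dualValue n f X0 X T :=
    le_antisymm (primalValue_le_dualValue hf.continuous hX0 hX hreach)
      (le_of_fractional_knapsack (fun _ => measureReal_nonneg) (by positivity)
        (sum_mul_volume_disjointed_le_primalValue hf hX0 hX hreach)
        (fun _ hu _ huN => dualValue_le hf hX0 hX hreach hu huN))
  exact ⟨hgap, hgap ▸ exists_tendsto_dualValue hX⟩

/-- No duality gap: `p^T = d^T`, and there is a minimizing sequence of dual-feasible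
triples whose objective values converge to `p^T`. -/
theorem no_duality_gap (n : ℕ) (hn : 1 ≤ n)
    (f : (Fin n → ℝ) → (Fin n → ℝ))
    (hfpoly : ∀ i, ∃ p : MvPolynomial (Fin n) ℝ, ∀ x, f x i = MvPolynomial.eval x p)
    (X0 X : Set (Fin n → ℝ)) (hX0 : IsCompact X0) (hX : IsCompact X)
    (hreach : (⋃ t : ℕ, f^[t] '' X0) ⊆ X)
    (T : ℕ) (hT : 1 ≤ T) :
    primalValue n f X0 X T = dualValue n f X0 X T ∧
      ∃ (u : ℕ → ℝ) (v w : ℕ → (Fin n → ℝ) → ℝ),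
        (∀ k, DualFeasible n f X0 X (u k) (v k) (w k)) ∧
        Tendsto (fun k => ∫ x in X, (w k x + (T : ℝ) * u k)) atTop
          (𝓝 (primalValue n f X0 X T)) :=
  no_duality_gap_general n f hfpoly X0 X hX0 hX hreach T
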